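/- Let (X,τ) be a topological space. Define d : X × X → Ω(τ) by d(x,y) = {F a finite subset of τ | for all U ∈ F, x ∈ U implies y ∈ U}. Then (X,d) is an Ω(τ)-space (each d(x,y) is downward closed, d(x,x) = ⊥, and d(x,z) ≤ d(x,y) + d(y,z)), and the topology generated by (Ω(τ),X,d) equals τ. Consequently every topological space is generated by some continuity space. -/

import Mathlib

/-- `y` is well above `x` (written `y ≻ x`): for every `S` with `⨅ S ≤ x`
there is `s ∈ S` with `s ≤ y`. -/
def WellAbove {V : Type*} [CompleteLattice V] (y x : V) : Prop :=
  ∀ S : Set V, sInf S ≤ x → ∃ s ∈ S, s ≤ y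

theorem WellAbove.mono {V : Type*} [CompleteLattice V] {a b x : V}
    (h : WellAbove a x) (hab : a ≤ b) : WellAbove b x := by
  intro S hS
  obtain ⟨s, hs, hsa⟩ := h S hS
  exact ⟨s, hs, hsa.trans hab⟩

/-- A complete lattice `V` together with an addition `add` is a value quantale if it is
completely distributive (expressed via Raney's characterization `y = ⨅ {a | a ≻ y}`),
the set `{a | a ≻ ⊥}` is a filter (nonempty, upward closed, closed under binary meets),
and `add` is associative, commutative, has `⊥` as neutral element and distributes over
arbitrary infima. -/
structure IsValueQuantale (V : Type*) [CompleteLattice V] (add : V → V → V) : Prop where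
  raney : ∀ y : V, y = sInf {a | WellAbove a y}
  wellAbove_bot_nonempty : ∃ a : V, WellAbove a ⊥
  wellAbove_bot_upward : ∀ a b : V, WellAbove a ⊥ → a ≤ b → WellAbove b ⊥
  wellAbove_bot_inf : ∀ a b : V, WellAbove a ⊥ → WellAbove b ⊥ → WellAbove (a ⊓ b) ⊥
  add_assoc : ∀ a b c : V, add (add a b) c = add a (add b c)
  add_comm : ∀ a b : V, add a b = add b a
  add_bot : ∀ a : V, add a ⊥ = a
  add_sInf : ∀ (a : V) (S : Set V), add a (sInf S) = ⨅ s ∈ S, add a s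

/-- A value quantale, bundled as a class. -/
class ValueQuantale (V : Type*) extends CompleteLattice V, Add V where
  isVQ : IsValueQuantale V (· + ·)

/-- `d : X → X → V` is a `V`-space distance (w.r.t. the addition `add`). -/
structure IsVSpaceOn {V : Type*} [CompleteLattice V] (add : V → V → V)
    {X : Type*} (d : X → X → V) : Prop where
  refl : ∀ x, d x x = ⊥
  triangle : ∀ x y z, d x z ≤ add (d x y) (d y z)

/-- The open ball of radius `ε` about `x`: all `y` with `d x y ≺ ε`. -/
def ball {V X : Type*} [CompleteLattice V] (d : X → X → V) (ε : V) (x : X) : Set X :=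
  {y | WellAbove ε (d x y)}

/-- `U` is open for the topology generated by a continuity space. -/
def GenOpen {V X : Type*} [CompleteLattice V] (d : X → X → V) (U : Set X) : Prop :=
  ∀ x ∈ U, ∃ ε : V, WellAbove ε ⊥ ∧ ball d ε x ⊆ U

/-- The topology generated by a continuity space `(V, X, d)`. -/
def genTop {V X : Type*} [ValueQuantale V] (d : X → X → V) : TopologicalSpace X where
  IsOpen := GenOpen d
  isOpen_univ := fun _x _ => by
    obtain ⟨ε, hε⟩ := (ValueQuantale.isVQ (V := V)).wellAbove_bot_nonempty
    exact ⟨ε, hε, Set.subset_univ _⟩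
  isOpen_inter := fun U₁ U₂ h₁ h₂ x hx => by
    obtain ⟨ε₁, hε₁, hb₁⟩ := h₁ x hx.1
    obtain ⟨ε₂, hε₂, hb₂⟩ := h₂ x hx.2
    exact ⟨ε₁ ⊓ ε₂, (ValueQuantale.isVQ (V := V)).wellAbove_bot_inf _ _ hε₁ hε₂,
      fun y hy => ⟨hb₁ (WellAbove.mono hy inf_le_left), hb₂ (WellAbove.mono hy inf_le_right)⟩⟩
  isOpen_sUnion := fun S hS x hx => by
    obtain ⟨U, hU, hxU⟩ := hx
    obtain ⟨ε, hε, hb⟩ := hS U hU x hxU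
    exact ⟨ε, hε, hb.trans (Set.subset_sUnion_of_mem hU)⟩

/-- `Ω S`: the downward-closed families of finite subsets of `S`,
ordered by reverse inclusion. -/
abbrev Omega (S : Type*) := (LowerSet (Finset S))ᵒᵈ

/-- The underlying family of finite subsets of an element of `Ω S`. -/
def Omega.carrier {S : Type*} (A : Omega S) : Set (Finset S) :=
  ((OrderDual.ofDual A : LowerSet (Finset S)) : Set (Finset S))

/-- Construct an element of `Ω S` from a downward-closed family of finite subsets. -/
def Omega.mk {S : Type*} (A : Set (Finset S)) (h : IsLowerSet A) : Omega S :=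
  OrderDual.toDual ⟨A, h⟩

/-- Addition on `Ω S`: intersection of the families. -/
def omegaAdd {S : Type*} (A B : Omega S) : Omega S :=
  Omega.mk (Omega.carrier A ∩ Omega.carrier B)
    ((OrderDual.ofDual A : LowerSet (Finset S)).lower.inter
      (OrderDual.ofDual B : LowerSet (Finset S)).lower)

open TopologicalSpace in
/-- The distance `d(x,y) = {F a finite set of open sets | ∀ U ∈ F, x ∈ U → y ∈ U}`,
valued in `Ω τ` where `τ` is the collection of open sets of `X`. -/
def topDist (X : Type*) [TopologicalSpace X] (x y : X) : Omega (Opens X) :=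
  Omega.mk {F : Finset (Opens X) | ∀ U ∈ F, x ∈ U → y ∈ U}
    (by intro G F h hG U hU hx; exact hG U (h hU) hx)

/-!
In `Ω S` an element `A` is well above `B` exactly when `A ⊆ ↓F` for some `F ∈ B`, where `↓F`
is the principal family of subsets of `F`. From this `Ω S` is a value quantale, and the balls of
`topDist` about `x` are the sets containing some `{y | ∀ U ∈ F, x ∈ U → y ∈ U}` with `F` a finite
family of open sets. These are exactly the finite intersections of open neighbourhoods of `x`,
so they form a neighbourhood base of `x`, and the generated topology is the given one.
-/

open TopologicalSpace

theorem WellAbove.le {V : Type*} [CompleteLattice V] {a y : V} (h : WellAbove a y) : y ≤ a := by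
  obtain ⟨s, hs, hsa⟩ := h {y} sInf_singleton.le
  rwa [Set.mem_singleton_iff.1 hs] at hsa

namespace Omega

variable {S : Type*}

lemma isLowerSet_carrier (A : Omega S) : IsLowerSet A.carrier :=
  (OrderDual.ofDual A).lower

lemma carrier_injective : Function.Injective (carrier : Omega S → Set (Finset S)) :=
  fun _ _ h => congrArg OrderDual.toDual (LowerSet.ext h)

lemma le_iff_carrier_subset {A B : Omega S} : A ≤ B ↔ B.carrier ⊆ A.carrier :=
  LowerSet.coe_subset_coe.symm

@[simp] lemma carrier_bot : (⊥ : Omega S).carrier = Set.univ := rfl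

@[simp] lemma carrier_iInf {ι : Sort*} (f : ι → Omega S) :
    (⨅ i, f i).carrier = ⋃ i, (f i).carrier :=
  LowerSet.coe_iSup _

lemma mem_carrier_sInf {T : Set (Omega S)} {F : Finset S} :
    F ∈ (sInf T).carrier ↔ ∃ A ∈ T, F ∈ A.carrier :=
  LowerSet.mem_sSup_iff

@[simp] lemma carrier_omegaAdd (A B : Omega S) :
    (omegaAdd A B).carrier = A.carrier ∩ B.carrier := rfl

def principal (F : Finset S) : Omega S :=
  Omega.mk (Set.Iic F) (isLowerSet_Iic F)

lemma mem_carrier_principal_self (F : Finset S) : F ∈ (principal F).carrier :=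
  Set.self_mem_Iic

lemma le_principal_iff {A : Omega S} {F : Finset S} : A ≤ principal F ↔ F ∈ A.carrier :=
  le_iff_carrier_subset.trans
    ⟨fun h => h (mem_carrier_principal_self F), fun hF _ hG => A.isLowerSet_carrier hG hF⟩

lemma principal_le_principal_iff {F G : Finset S} : principal F ≤ principal G ↔ G ⊆ F :=
  le_principal_iff

lemma wellAbove_iff {A B : Omega S} : WellAbove A B ↔ ∃ F ∈ B.carrier, principal F ≤ A := by
  constructor
  · intro h
    have hcover : sInf (principal '' B.carrier) ≤ B := le_iff_carrier_subset.2 fun F hF =>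
      mem_carrier_sInf.2 ⟨principal F, Set.mem_image_of_mem _ hF, mem_carrier_principal_self F⟩
    obtain ⟨_, ⟨F, hF, rfl⟩, hFA⟩ := h _ hcover
    exact ⟨F, hF, hFA⟩
  · rintro ⟨F, hF, hFA⟩ T hT
    obtain ⟨s, hs, hFs⟩ := mem_carrier_sInf.1 (le_iff_carrier_subset.1 hT hF)
    exact ⟨s, hs, (le_principal_iff.2 hFs).trans hFA⟩

lemma wellAbove_principal {B : Omega S} {F : Finset S} (hF : F ∈ B.carrier) :
    WellAbove (principal F) B :=
  wellAbove_iff.2 ⟨F, hF, le_rfl⟩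

lemma wellAbove_bot_iff {A : Omega S} : WellAbove A ⊥ ↔ ∃ F, principal F ≤ A := by
  simp [wellAbove_iff]

lemma eq_sInf_wellAbove (B : Omega S) : B = sInf {A | WellAbove A B} :=
  le_antisymm (le_sInf fun _ => WellAbove.le) <| le_iff_carrier_subset.2 fun F hF =>
    mem_carrier_sInf.2 ⟨principal F, wellAbove_principal hF, mem_carrier_principal_self F⟩

lemma wellAbove_bot_inf {A B : Omega S} (hA : WellAbove A ⊥) (hB : WellAbove B ⊥) :
    WellAbove (A ⊓ B) ⊥ := by
  classical
  obtain ⟨F, hFA⟩ := wellAbove_bot_iff.1 hA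
  obtain ⟨G, hGB⟩ := wellAbove_bot_iff.1 hB
  refine wellAbove_bot_iff.2 ⟨F ∪ G, le_inf ?_ ?_⟩
  · exact (principal_le_principal_iff.2 Finset.subset_union_left).trans hFA
  · exact (principal_le_principal_iff.2 Finset.subset_union_right).trans hGB

lemma omegaAdd_sInf (A : Omega S) (T : Set (Omega S)) :
    omegaAdd A (sInf T) = ⨅ B ∈ T, omegaAdd A B := by
  apply carrier_injective
  ext F
  simp [mem_carrier_sInf]

lemma isValueQuantale : IsValueQuantale (Omega S) omegaAdd where
  raney := eq_sInf_wellAbove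
  wellAbove_bot_nonempty := ⟨principal ∅, wellAbove_principal trivial⟩
  wellAbove_bot_upward _ _ h hab := h.mono hab
  wellAbove_bot_inf _ _ := wellAbove_bot_inf
  add_assoc _ _ _ := carrier_injective (by simp [Set.inter_assoc])
  add_comm _ _ := carrier_injective (by simp [Set.inter_comm])
  add_bot _ := carrier_injective (by simp)
  add_sInf := omegaAdd_sInf

end Omega

section topDist

variable {X : Type*} [TopologicalSpace X]

@[simp] lemma mem_carrier_topDist {x y : X} {F : Finset (Opens X)} :
    F ∈ (topDist X x y).carrier ↔ ∀ U ∈ F, x ∈ U → y ∈ U :=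
  Iff.rfl

lemma isVSpaceOn_topDist : IsVSpaceOn omegaAdd (topDist X) where
  refl x := Omega.carrier_injective (by ext F; simp)
  triangle _ _ _ := Omega.le_iff_carrier_subset.2 fun _ ⟨hxy, hyz⟩ U hU hx =>
    hyz U hU (hxy U hU hx)

lemma mem_ball_topDist {ε : Omega (Opens X)} {x y : X} :
    y ∈ ball (topDist X) ε x ↔
      ∃ F : Finset (Opens X), (∀ U ∈ F, x ∈ U → y ∈ U) ∧ Omega.principal F ≤ ε :=
  Omega.wellAbove_iff

lemma isOpen_setOf_forall_mem_imp_mem (F : Finset (Opens X)) (x : X) :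
    IsOpen {y | ∀ U ∈ F, x ∈ U → y ∈ U} := by
  simp only [Set.ofPred_forall]
  refine Set.Finite.isOpen_biInter F.finite_toSet fun U _ => ?_
  by_cases hx : x ∈ U <;> simp [hx, U.isOpen]

lemma isOpen_of_genOpen_topDist {U : Set X} (hU : GenOpen (topDist X) U) : IsOpen U := by
  refine isOpen_iff_forall_mem_open.2 fun x hx => ?_
  obtain ⟨ε, hε, hball⟩ := hU x hx
  obtain ⟨F, hFε⟩ := Omega.wellAbove_bot_iff.1 hε
  exact ⟨_, fun y hy => hball (mem_ball_topDist.2 ⟨F, hy, hFε⟩),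
    isOpen_setOf_forall_mem_imp_mem F x, fun _ _ => id⟩

lemma IsOpen.genOpen_topDist {U : Set X} (hU : IsOpen U) : GenOpen (topDist X) U := by
  intro x hx
  let V : Opens X := ⟨U, hU⟩
  refine ⟨Omega.principal {V}, Omega.wellAbove_principal trivial, fun y hy => ?_⟩
  obtain ⟨F, hxy, hFV⟩ := mem_ball_topDist.1 hy
  exact hxy V (Omega.principal_le_principal_iff.1 hFV (Finset.mem_singleton_self V)) hx

lemma genOpen_topDist_iff {U : Set X} : GenOpen (topDist X) U ↔ IsOpen U :=
  ⟨isOpen_of_genOpen_topDist, IsOpen.genOpen_topDist⟩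

end topDist

open TopologicalSpace in
/-- for a topological space `(X,τ)`, `topDist` makes `X` an `Ω(τ)`-space
whose generated topology is exactly `τ`; consequently every topological space is
generated by some continuity space. -/
theorem topDist_generates {X : Type u} [TopologicalSpace X] :
    IsVSpaceOn omegaAdd (topDist X) ∧
    (∀ U : Set X, GenOpen (topDist X) U ↔ IsOpen U) ∧
    ∃ (W : Type u) (_ : CompleteLattice W) (add : W → W → W) (δ : X → X → W),
      IsValueQuantale W add ∧ IsVSpaceOn add δ ∧ ∀ U : Set X, GenOpen δ U ↔ IsOpen U :=
  ⟨isVSpaceOn_topDist, fun _ => genOpen_topDist_iff,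
    Omega (Opens X), inferInstance, omegaAdd, topDist X,
      Omega.isValueQuantale, isVSpaceOn_topDist, fun _ => genOpen_topDist_iff⟩
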